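/- arXiv:1702.07573 — 4 statements merged into one kernel-verified Lean document; each statement's English description precedes it below -/
import Mathlib

section
/- Let m : ℝ² → S² ⊂ ℝ³ and m̃ : ℝ² → S² be admissible configurations related by m(r) = S m̃(R r), where R ∈ O(2) acts on the plane ℝ² and S ∈ O(2) acts on the horizontal spin components (m_x, m_y) while leaving m_z unchanged. Then the topological charges satisfy Q(m) = det(R S) · Q(m̃). -/
open MeasureTheory Real Matrix Filter

noncomputable section

/-- The plane `ℝ²`. -/
abbrev Plane : Type := ℝ × ℝ

/-- Spin vectors in `ℝ³`. -/
abbrev Spin : Type := Fin 3 → ℝ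

/-- Squared Euclidean length of a spin vector. -/
def sq3 (v : Spin) : ℝ := ∑ i : Fin 3, v i ^ 2

/-- The vertical unit vector `ê_z`. -/
def ez : Spin := ![0, 0, 1]

/-- Partial derivative in the `x`-direction. -/
def pdx (m : Plane → Spin) (r : Plane) : Spin := fderiv ℝ m r (1, 0)

/-- Partial derivative in the `y`-direction. -/
def pdy (m : Plane → Spin) (r : Plane) : Spin := fderiv ℝ m r (0, 1)

/-- Partial derivative in direction `ν ∈ {x, y}`. -/
def pd (ν : Fin 2) (m : Plane → Spin) (r : Plane) : Spin :=
  if ν = 0 then pdx m r else pdy m r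

/-- `|∇m|² = |∂ₓ m|² + |∂ᵧ m|²` (Euclidean norms). -/
def gradSq (m : Plane → Spin) (r : Plane) : ℝ := sq3 (pdx m r) + sq3 (pdy m r)

/-- An admissible configuration: a smooth map `ℝ² → S² ⊂ ℝ³` tending to `ê_z`
at infinity, with square-integrable gradient and integrable `1 - m_z`. -/
structure Admissible (m : Plane → Spin) : Prop where
  smooth : ContDiff ℝ (⊤ : ℕ∞) m
  sphere : ∀ r, sq3 (m r) = 1
  decay : Tendsto m (cocompact Plane) (nhds ez)
  grad_sq_integrable : Integrable (gradSq m)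
  zeeman_integrable : Integrable fun r : Plane => 1 - m r 2

/-- The topological charge `Q(m) = (1/4π) ∫ m · (∂ₓ m × ∂ᵧ m)`. -/
def topCharge (m : Plane → Spin) : ℝ :=
  (1 / (4 * π)) * ∫ r : Plane, m r ⬝ᵥ (crossProduct (pdx m r) (pdy m r))

/-- The 2D Levi-Civita symbol. -/
def lc : Fin 2 → Fin 2 → ℝ := ![![0, 1], ![-1, 0]]

/-- The 2×2 chirality tensor `L(m)` of Lifshitz invariants,
`L_{μν}(m) = Σ_κ ε_{μκ} (m_z ∂_ν m_κ − m_κ ∂_ν m_z)`. -/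
def chirality (m : Plane → Spin) (r : Plane) : Matrix (Fin 2) (Fin 2) ℝ :=
  Matrix.of fun μ ν : Fin 2 => ∑ κ : Fin 2,
    lc μ κ * (m r 2 * pd ν m r κ.castSucc - m r κ.castSucc * pd ν m r 2)

/-- Frobenius inner product of 2×2 matrices. -/
def frob (A B : Matrix (Fin 2) (Fin 2) ℝ) : ℝ := ∑ μ : Fin 2, ∑ ν : Fin 2, A μ ν * B μ ν

/-- Squared Frobenius norm `|D|² = D : D`. -/
def frobSq (D : Matrix (Fin 2) (Fin 2) ℝ) : ℝ := frob D D

/-- The DMI energy density `e_DM(D; m) = D : L(m)`. -/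
def eDM (D : Matrix (Fin 2) (Fin 2) ℝ) (m : Plane → Spin) (r : Plane) : ℝ :=
  frob D (chirality m r)

/-- The micromagnetic energy functional. -/
def energy (J B K : ℝ) (D : Matrix (Fin 2) (Fin 2) ℝ) (m : Plane → Spin) : ℝ :=
  ∫ r : Plane,
    (J / 2) * gradSq m r + eDM D m r + B * (1 - m r 2) + K * ((m r 2) ^ 2 - 1)

/-- The least energy `E_Q` over the homotopy class of charge `Q`. -/
def leastEnergy (J B K : ℝ) (D : Matrix (Fin 2) (Fin 2) ℝ) (q : ℤ) : ℝ :=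
  sInf {e : ℝ | ∃ m, Admissible m ∧ topCharge m = (q : ℝ) ∧ energy J B K D m = e}

/-- Membership in `O(2)`. -/
def IsO2 (A : Matrix (Fin 2) (Fin 2) ℝ) : Prop := Aᵀ * A = 1

/-- Action of `S ∈ O(2)` on the horizontal spin components, fixing `m_z`. -/
def spinAct (S : Matrix (Fin 2) (Fin 2) ℝ) (v : Spin) : Spin :=
  ![S 0 0 * v 0 + S 0 1 * v 1, S 1 0 * v 0 + S 1 1 * v 1, v 2]

/-- Action of `R ∈ O(2)` on the plane. -/
def planeAct (R : Matrix (Fin 2) (Fin 2) ℝ) (r : Plane) : Plane :=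
  (R 0 0 * r.1 + R 0 1 * r.2, R 1 0 * r.1 + R 1 1 * r.2)

/-- The Belavin–Polyakov core profile. -/
def mcore (r : Plane) : Spin :=
  ![-2 * r.2 / (r.1 ^ 2 + r.2 ^ 2 + 1), 2 * r.1 / (r.1 ^ 2 + r.2 ^ 2 + 1),
    (r.1 ^ 2 + r.2 ^ 2 - 1) / (r.1 ^ 2 + r.2 ^ 2 + 1)]

/-- Reflection in horizontal spin space, `m̄ = (m_x, −m_y, m_z)`. -/
def reflectSpin (m : Plane → Spin) (r : Plane) : Spin := ![m r 0, -m r 1, m r 2]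



section Aux

lemma spinAct_triple (S : Matrix (Fin 2) (Fin 2) ℝ) (r00 r01 r10 r11 : ℝ) (u a b : Spin) :
    spinAct S u ⬝ᵥ (crossProduct (spinAct S (r00 • a + r10 • b)) (spinAct S (r01 • a + r11 • b))) =
      ((r00 * r11 - r01 * r10) * S.det) * (u ⬝ᵥ (crossProduct a b)) := by
  simp only [spinAct, cross_apply, Matrix.det_fin_two, Pi.add_apply, Pi.smul_apply,
    smul_eq_mul, dotProduct, Fin.sum_univ_three]
  simp only [Matrix.cons_val_zero, Matrix.cons_val_one, Matrix.head_cons,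
    Matrix.cons_val_two, Matrix.tail_cons]
  ring

/-- The linear spin action as a linear map. -/
def spinLin (S : Matrix (Fin 2) (Fin 2) ℝ) : Spin →ₗ[ℝ] Spin where
  toFun := spinAct S
  map_add' u v := by
    funext i
    fin_cases i <;> simp [spinAct] <;> ring
  map_smul' c u := by
    funext i
    fin_cases i <;> simp [spinAct] <;> ring

end Aux

/-- If `m(r) = S m̃(R r)` with `R, S ∈ O(2)` (`S` acting on the
horizontal spin components), then `Q(m) = det(R S) · Q(m̃)`. -/
theorem topCharge_transform
    (R S : Matrix (Fin 2) (Fin 2) ℝ) (hR : IsO2 R) (hS : IsO2 S)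
    (m mt : Plane → Spin) (hm : Admissible m) (hmt : Admissible mt)
    (hrel : ∀ r : Plane, m r = spinAct S (mt (planeAct R r))) :
    topCharge m = (R * S).det * topCharge mt := by
  classical
  -- determinant facts for `R`
  have hdetR : R.det * R.det = 1 := by
    have h := congrArg Matrix.det hR
    rwa [Matrix.det_mul, Matrix.det_transpose, Matrix.det_one] at h
  have hRdet_unit : IsUnit R.det := IsUnit.of_mul_eq_one _ hdetR
  have hRdet_ne : R.det ≠ 0 := by
    rcases mul_self_eq_one_iff.mp hdetR with h | h <;> rw [h] <;> norm_num
  -- the plane action as a (continuous) linear equivalence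
  set b : Module.Basis (Fin 2) ℝ Plane := Module.Basis.finTwoProd ℝ with hb
  set eL : Plane ≃ₗ[ℝ] Plane := Matrix.toLinearEquiv b R hRdet_unit with heLdef
  have hRmat : R = !![R 0 0, R 0 1; R 1 0, R 1 1] := by
    ext i j; fin_cases i <;> fin_cases j <;> rfl
  have heL : ∀ r : Plane, eL r = planeAct R r := by
    intro r
    show Matrix.toLin b b R r = planeAct R r
    conv_lhs => rw [hRmat]
    rw [hb, Matrix.toLin_finTwoProd_apply]
    rfl
  set eC : Plane ≃L[ℝ] Plane := eL.toContinuousLinearEquiv with heC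
  have heC' : ∀ r : Plane, eC r = planeAct R r := by
    intro r
    rw [show eC r = eL r from congrFun (LinearEquiv.coe_toContinuousLinearEquiv' eL) r]
    exact heL r
  -- measure preservation
  have hlindet : LinearMap.det (Matrix.toLin b b R) = R.det := LinearMap.det_toLin b R
  have hmap : Measure.map (planeAct R) (volume : Measure Plane) = volume := by
    have hfun : planeAct R = ⇑(Matrix.toLin b b R) := funext fun r => (heL r).symm
    rw [hfun, MeasureTheory.Measure.map_linearMap_addHaar_eq_smul_addHaar volume
      (by rw [hlindet]; exact hRdet_ne)]
    rw [hlindet]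
    rcases mul_self_eq_one_iff.mp hdetR with h | h <;> rw [h] <;> norm_num
  have hcont : Continuous (planeAct R) := by
    unfold planeAct; fun_prop
  have hmp : MeasurePreserving (planeAct R) (volume : Measure Plane) volume :=
    ⟨hcont.measurable, hmap⟩
  have hemb : MeasurableEmbedding (planeAct R) := by
    have hfun : planeAct R = ⇑eC.toHomeomorph := funext fun r => (heC' r).symm
    rw [hfun]
    exact eC.toHomeomorph.measurableEmbedding
  -- derivative computation
  have hdiff : Differentiable ℝ mt := hmt.smooth.differentiable (by simp)
  set SC : Spin →L[ℝ] Spin := (spinLin S).toContinuousLinearMap with hSC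
  set LC : Plane →L[ℝ] Plane := (Matrix.toLin b b R).toContinuousLinearMap with hLC
  have hLC' : ∀ r : Plane, LC r = planeAct R r := fun r => heL r
  have hmfun : m = fun r => SC (mt (LC r)) := by
    funext r
    rw [hrel r]
    show spinAct S (mt (planeAct R r)) = spinAct S (mt (LC r))
    rw [hLC' r]
  have h1 : ∀ r : Plane, fderiv ℝ m r
      = SC.comp ((fderiv ℝ mt (planeAct R r)).comp LC) := by
    intro r
    rw [hmfun]
    have hd1 : DifferentiableAt ℝ (mt ∘ LC) r :=
      (hdiff (LC r)).comp r LC.differentiableAt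
    rw [show (fun r => SC (mt (LC r))) = SC ∘ (mt ∘ LC) from rfl]
    rw [fderiv_comp (x := r) SC.differentiableAt hd1, SC.fderiv]
    rw [show (mt ∘ LC : Plane → Spin) = fun x => mt (LC x) from rfl]
    rw [show (fun x => mt (LC x)) = mt ∘ LC from rfl]
    rw [fderiv_comp (x := r) (hdiff (LC r)) LC.differentiableAt, LC.fderiv]
    rw [hLC' r]
  have hx : planeAct R ((1:ℝ), (0:ℝ)) = (R 0 0) • ((1:ℝ),(0:ℝ)) + (R 1 0) • ((0:ℝ),(1:ℝ)) := by
    simp [planeAct, Prod.ext_iff]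
  have hy : planeAct R ((0:ℝ), (1:ℝ)) = (R 0 1) • ((1:ℝ),(0:ℝ)) + (R 1 1) • ((0:ℝ),(1:ℝ)) := by
    simp [planeAct, Prod.ext_iff]
  have hpdx : ∀ r : Plane, pdx m r
      = spinAct S (R 0 0 • pdx mt (planeAct R r) + R 1 0 • pdy mt (planeAct R r)) := by
    intro r
    show fderiv ℝ m r (1, 0) = _
    rw [h1 r]
    simp only [ContinuousLinearMap.comp_apply]
    rw [show LC ((1:ℝ), (0:ℝ)) = planeAct R (1, 0) from hLC' _, hx, map_add, _root_.map_smul, _root_.map_smul]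
    rfl
  have hpdy : ∀ r : Plane, pdy m r
      = spinAct S (R 0 1 • pdx mt (planeAct R r) + R 1 1 • pdy mt (planeAct R r)) := by
    intro r
    show fderiv ℝ m r (0, 1) = _
    rw [h1 r]
    simp only [ContinuousLinearMap.comp_apply]
    rw [show LC ((0:ℝ), (1:ℝ)) = planeAct R (0, 1) from hLC' _, hy, map_add, _root_.map_smul, _root_.map_smul]
    rfl
  -- pointwise integrand equality
  set J : Plane → ℝ := fun r => mt r ⬝ᵥ (crossProduct (pdx mt r) (pdy mt r)) with hJ
  have hint : ∀ r : Plane, m r ⬝ᵥ (crossProduct (pdx m r) (pdy m r))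
      = (R.det * S.det) * J (planeAct R r) := by
    intro r
    rw [hrel r, hpdx r, hpdy r, spinAct_triple, hJ]
    rw [Matrix.det_fin_two R]
  -- conclude
  unfold topCharge
  rw [Matrix.det_mul]
  rw [show (fun r : Plane => m r ⬝ᵥ (crossProduct (pdx m r) (pdy m r)))
      = fun r => (R.det * S.det) * J (planeAct R r) from funext hint]
  rw [MeasureTheory.integral_const_mul]
  rw [show (∫ r : Plane, J (planeAct R r)) = ∫ r : Plane, J r from hmp.integral_comp hemb J]
  ring

end
end

section
/- Let m, m̃ : ℝ² → S² be admissible configurations related by m(r) = S m̃(r̃) with r̃ = R r, for R, S ∈ O(2) (S acting on the horizontal spin components). Then the 2×2 chirality tensors satisfy L(m)(r) = (det S) · S L(m̃)(r̃) R, where L(m) is evaluated at r and L(m̃) at r̃ = R r. -/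
open MeasureTheory Real Matrix Filter

noncomputable section

def LR (R : Matrix (Fin 2) (Fin 2) ℝ) : Plane →L[ℝ] Plane :=
  ((R 0 0) • ContinuousLinearMap.fst ℝ ℝ ℝ + (R 0 1) • ContinuousLinearMap.snd ℝ ℝ ℝ).prod
  ((R 1 0) • ContinuousLinearMap.fst ℝ ℝ ℝ + (R 1 1) • ContinuousLinearMap.snd ℝ ℝ ℝ)

def LS (S : Matrix (Fin 2) (Fin 2) ℝ) : Spin →L[ℝ] Spin :=
  ContinuousLinearMap.pi
    ![(S 0 0) • ContinuousLinearMap.proj 0 + (S 0 1) • ContinuousLinearMap.proj 1,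
      (S 1 0) • ContinuousLinearMap.proj 0 + (S 1 1) • ContinuousLinearMap.proj 1,
      ContinuousLinearMap.proj 2]

lemma LR_eq (R : Matrix (Fin 2) (Fin 2) ℝ) (r : Plane) : LR R r = planeAct R r := by
  simp [LR, planeAct, smul_eq_mul]

lemma LS_eq (S : Matrix (Fin 2) (Fin 2) ℝ) (v : Spin) : LS S v = spinAct S v := by
  funext i
  fin_cases i <;>
    simp [LS, spinAct, ContinuousLinearMap.pi_apply, smul_eq_mul]

lemma fderiv_transform (S R : Matrix (Fin 2) (Fin 2) ℝ) (m mt : Plane → Spin)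
    (hmt : Differentiable ℝ mt)
    (hrel : ∀ r : Plane, m r = spinAct S (mt (planeAct R r))) (r : Plane) :
    fderiv ℝ m r = (LS S).comp ((fderiv ℝ mt (planeAct R r)).comp (LR R)) := by
  have hm : m = (LS S) ∘ (mt ∘ (LR R)) := by
    funext x
    rw [Function.comp_apply, Function.comp_apply, LR_eq, hrel, LS_eq]
  rw [hm]
  rw [fderiv_comp (x := r) (LS S).differentiableAt ((hmt.comp (LR R).differentiable) r)]
  rw [fderiv_comp (x := r) (hmt _) (LR R).differentiableAt]
  simp [ContinuousLinearMap.fderiv, LR_eq]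

/-- If `m(r) = S m̃(R r)` with `R, S ∈ O(2)` (`S` acting on the
horizontal spin components), then `L(m)(r) = (det S) · S L(m̃)(R r) R`. -/
theorem chirality_transform
    (R S : Matrix (Fin 2) (Fin 2) ℝ) (hR : IsO2 R) (hS : IsO2 S)
    (m mt : Plane → Spin) (hm : Admissible m) (hmt : Admissible mt)
    (hrel : ∀ r : Plane, m r = spinAct S (mt (planeAct R r))) :
    ∀ r : Plane, chirality m r = S.det • (S * chirality mt (planeAct R r) * R) := by
  intro r
  have hdiff : Differentiable ℝ mt := hmt.smooth.differentiable (by simp)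
  set p := planeAct R r with hp
  set a := pdx mt p with ha
  set b := pdy mt p with hb
  have hfd := fderiv_transform S R m mt hdiff hrel r
  have hx : pdx m r = spinAct S (R 0 0 • a + R 1 0 • b) := by
    rw [pdx, hfd, ← hp]
    show LS S (fderiv ℝ mt p (LR R (1, 0))) = _
    have h1 : LR R ((1:ℝ),(0:ℝ)) = R 0 0 • ((1:ℝ),(0:ℝ)) + R 1 0 • ((0:ℝ),(1:ℝ)) := by
      rw [LR_eq]; simp [planeAct, Prod.ext_iff]
    rw [h1, (fderiv ℝ mt p).map_add, (fderiv ℝ mt p).map_smul, (fderiv ℝ mt p).map_smul,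
      LS_eq]
    rfl
  have hy : pdy m r = spinAct S (R 0 1 • a + R 1 1 • b) := by
    rw [pdy, hfd, ← hp]
    show LS S (fderiv ℝ mt p (LR R (0, 1))) = _
    have h1 : LR R ((0:ℝ),(1:ℝ)) = R 0 1 • ((1:ℝ),(0:ℝ)) + R 1 1 • ((0:ℝ),(1:ℝ)) := by
      rw [LR_eq]; simp [planeAct, Prod.ext_iff]
    rw [h1, (fderiv ℝ mt p).map_add, (fderiv ℝ mt p).map_smul, (fderiv ℝ mt p).map_smul,
      LS_eq]
    rfl
  -- O(2) facts for S
  have hdet1 : S.det * S.det = 1 := by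
    have h := congrArg Matrix.det hS
    rwa [Matrix.det_mul, Matrix.det_transpose, Matrix.det_one] at h
  have h1 : S 0 0 * S 0 0 + S 1 0 * S 1 0 = 1 := by
    have := congrFun (congrFun hS 0) 0
    simpa [Matrix.mul_apply, Fin.sum_univ_two, Matrix.transpose_apply, Matrix.one_apply] using this
  have h2 : S 0 1 * S 0 1 + S 1 1 * S 1 1 = 1 := by
    have := congrFun (congrFun hS 1) 1
    simpa [Matrix.mul_apply, Fin.sum_univ_two, Matrix.transpose_apply, Matrix.one_apply] using this
  have h3 : S 0 0 * S 0 1 + S 1 0 * S 1 1 = 0 := by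
    have := congrFun (congrFun hS 0) 1
    simpa [Matrix.mul_apply, Fin.sum_univ_two, Matrix.transpose_apply, Matrix.one_apply] using this
  have hS11 : S 1 1 = S.det * S 0 0 := by
    rw [Matrix.det_fin_two]
    linear_combination S 1 0 * h3 - S 1 1 * h1
  have hS10 : S 1 0 = -(S.det * S 0 1) := by
    rw [Matrix.det_fin_two]
    linear_combination S 1 1 * h3 - S 1 0 * h2
  rcases mul_self_eq_one_iff.mp hdet1 with hd | hd <;>
    rw [hd] at hS10 hS11 <;>
    ext μ ν <;>
    fin_cases μ <;> fin_cases ν <;>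
      simp [chirality, pd, lc, hx, hy, hrel r, ← hp, spinAct, Fin.sum_univ_two,
        Matrix.mul_apply, Matrix.smul_apply, smul_eq_mul, Pi.add_apply, Pi.smul_apply,
        hd, hS10, hS11] <;>
      ring

end
end

section
/- (Belavin–Polyakov topological lower bound) For every admissible configuration m : ℝ² → S², the Dirichlet energy dominates the topological charge: (1/2) ∫_{ℝ²} |∇m|² dr ≥ 4π |Q(m)|. -/
open MeasureTheory Real Matrix Filter

noncomputable section

set_option maxHeartbeats 2000000 in
lemma key_scalar (c0 c1 c2 a0 a1 a2 b0 b1 b2 : ℝ) (hc : c0^2+c1^2+c2^2 = 1) :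
    |c0*(a1*b2-a2*b1) + c1*(a2*b0-a0*b2) + c2*(a0*b1-a1*b0)| ≤
      (a0^2+a1^2+a2^2 + (b0^2+b1^2+b2^2)) / 2 := by
  have hcs : (c0*(a1*b2-a2*b1) + c1*(a2*b0-a0*b2) + c2*(a0*b1-a1*b0))^2 ≤
      (a0^2+a1^2+a2^2) * (b0^2+b1^2+b2^2) := by
    nlinarith [sq_nonneg (c0*(a2*b0-a0*b2) - c1*(a1*b2-a2*b1)),
      sq_nonneg (c0*(a0*b1-a1*b0) - c2*(a1*b2-a2*b1)),
      sq_nonneg (c1*(a0*b1-a1*b0) - c2*(a2*b0-a0*b2)),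
      sq_nonneg (a0*b0 + a1*b1 + a2*b2)]
  have h2 : (a0^2+a1^2+a2^2) * (b0^2+b1^2+b2^2) ≤
      ((a0^2+a1^2+a2^2 + (b0^2+b1^2+b2^2)) / 2)^2 := by
    nlinarith [sq_nonneg (a0^2+a1^2+a2^2 - (b0^2+b1^2+b2^2))]
  have hS : (0:ℝ) ≤ (a0^2+a1^2+a2^2 + (b0^2+b1^2+b2^2)) / 2 := by positivity
  rw [abs_le]; constructor <;> nlinarith

lemma key_pointwise (c a b : Fin 3 → ℝ) (hc : sq3 c = 1) :
    |c ⬝ᵥ (crossProduct a b)| ≤ (sq3 a + sq3 b) / 2 := by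
  simp only [sq3, Fin.sum_univ_three, crossProduct, dotProduct,
    LinearMap.mk₂_apply, Matrix.cons_val_zero, Matrix.cons_val_one, Matrix.head_cons,
    Matrix.cons_val_two, Matrix.tail_cons] at *
  exact key_scalar _ _ _ _ _ _ _ _ _ hc

/-- **Belavin–Polyakov bound.** For every admissible configuration,
`(1/2) ∫ |∇m|² ≥ 4π |Q(m)|`. -/
theorem belavin_polyakov_bound (m : Plane → Spin) (hm : Admissible m) :
    4 * π * |topCharge m| ≤ (1 / 2) * ∫ r : Plane, gradSq m r := by
  have hptw : ∀ r : Plane, |m r ⬝ᵥ (crossProduct (pdx m r) (pdy m r))| ≤ gradSq m r / 2 := by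
    intro r
    simpa [gradSq] using key_pointwise (m r) (pdx m r) (pdy m r) (hm.sphere r)
  have hI : |∫ r : Plane, m r ⬝ᵥ (crossProduct (pdx m r) (pdy m r))| ≤
      (1 / 2) * ∫ r : Plane, gradSq m r := by
    calc |∫ r : Plane, m r ⬝ᵥ (crossProduct (pdx m r) (pdy m r))|
        ≤ ∫ r : Plane, |m r ⬝ᵥ (crossProduct (pdx m r) (pdy m r))| := by
          simpa using norm_integral_le_integral_norm
            (fun r : Plane => m r ⬝ᵥ (crossProduct (pdx m r) (pdy m r)))
      _ ≤ ∫ r : Plane, gradSq m r / 2 :=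
          integral_mono_of_nonneg (Filter.Eventually.of_forall fun r => abs_nonneg _)
            (hm.grad_sq_integrable.div_const 2) (Filter.Eventually.of_forall hptw)
      _ = (1 / 2) * ∫ r : Plane, gradSq m r := by rw [integral_div]; ring
  have hpi : (0:ℝ) < π := Real.pi_pos
  have : 4 * π * |topCharge m| =
      |∫ r : Plane, m r ⬝ᵥ (crossProduct (pdx m r) (pdy m r))| := by
    rw [topCharge, abs_mul, abs_of_pos (show (0:ℝ) < 1 / (4 * π) by positivity)]
    field_simp
  rw [this]
  exact hI


end
end

section
/- (Degenerate case) Let J > 0, B > 0, K⊥ ≤ 0 and D = diag(0, D₂) with D₂ ≥ 0 (i.e. D₁ = 0, det D = 0). Then the least energies are symmetric under charge reversal: E_Q = E_{−Q} for all Q ∈ ℤ. -/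
open MeasureTheory Real Matrix Filter

noncomputable section

/-- The horizontal spin reflection as a continuous linear map on `Spin`. -/
def refl3 : Spin →L[ℝ] Spin :=
  LinearMap.toContinuousLinearMap
    { toFun := fun v => ![v 0, -v 1, v 2]
      map_add' := by
        intro u v; funext i; fin_cases i <;>
          simp [Matrix.cons_val_zero, Matrix.cons_val_one, Matrix.head_cons] <;> ring
      map_smul' := by
        intro c v; funext i; fin_cases i <;>
          simp [Matrix.cons_val_zero, Matrix.cons_val_one, Matrix.head_cons] <;> ring }

lemma refl3_apply (v : Spin) : refl3 v = ![v 0, -v 1, v 2] := rfl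

lemma reflectSpin_eq (m : Plane → Spin) : reflectSpin m = refl3 ∘ m := by
  funext r; rfl

lemma sq3_refl3 (v : Spin) : sq3 (refl3 v) = sq3 v := by
  simp [sq3, refl3_apply, Fin.sum_univ_three]

lemma pdx_reflect (m : Plane → Spin) (hm : ContDiff ℝ (⊤ : ℕ∞) m) (r : Plane) :
    pdx (reflectSpin m) r = refl3 (pdx m r) := by
  rw [reflectSpin_eq, pdx, pdx]
  rw [(refl3.hasFDerivAt.comp r (hm.differentiable (by simp) r).hasFDerivAt).fderiv]
  rfl

lemma pdy_reflect (m : Plane → Spin) (hm : ContDiff ℝ (⊤ : ℕ∞) m) (r : Plane) :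
    pdy (reflectSpin m) r = refl3 (pdy m r) := by
  rw [reflectSpin_eq, pdy, pdy]
  rw [(refl3.hasFDerivAt.comp r (hm.differentiable (by simp) r).hasFDerivAt).fderiv]
  rfl

lemma gradSq_reflect (m : Plane → Spin) (hm : ContDiff ℝ (⊤ : ℕ∞) m) :
    gradSq (reflectSpin m) = gradSq m := by
  funext r
  rw [gradSq, gradSq, pdx_reflect m hm, pdy_reflect m hm, sq3_refl3, sq3_refl3]

lemma reflectSpin_two (m : Plane → Spin) (r : Plane) :
    reflectSpin m r 2 = m r 2 := rfl

lemma refl3_ez : refl3 ez = ez := by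
  funext i; fin_cases i <;> simp [refl3_apply, ez]

lemma admissible_reflect {m : Plane → Spin} (hm : Admissible m) :
    Admissible (reflectSpin m) := by
  constructor
  · rw [reflectSpin_eq]
    exact refl3.contDiff.comp hm.smooth
  · intro r
    rw [reflectSpin_eq, Function.comp_apply, sq3_refl3]
    exact hm.sphere r
  · rw [reflectSpin_eq, ← refl3_ez]
    exact (refl3.continuous.tendsto ez).comp hm.decay
  · rw [gradSq_reflect m hm.smooth]
    exact hm.grad_sq_integrable
  · simpa only [reflectSpin_two] using hm.zeeman_integrable

lemma topCharge_reflect {m : Plane → Spin} (hm : Admissible m) :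
    topCharge (reflectSpin m) = -topCharge m := by
  rw [topCharge, topCharge]
  have h : ∀ r : Plane,
      reflectSpin m r ⬝ᵥ (crossProduct (pdx (reflectSpin m) r) (pdy (reflectSpin m) r))
        = -(m r ⬝ᵥ (crossProduct (pdx m r) (pdy m r))) := by
    intro r
    rw [pdx_reflect m hm.smooth, pdy_reflect m hm.smooth]
    simp only [reflectSpin, refl3_apply, cross_apply, dotProduct, Fin.sum_univ_three,
      Matrix.cons_val_zero, Matrix.cons_val_one, Matrix.head_cons, Matrix.cons_val_two,
      Matrix.tail_cons]
    ring
  simp only [h]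
  rw [integral_neg, mul_neg]

lemma energy_reflect (J B K D₂ : ℝ) {m : Plane → Spin} (hm : Admissible m) :
    energy J B K (Matrix.diagonal ![0, D₂]) (reflectSpin m)
      = energy J B K (Matrix.diagonal ![0, D₂]) m := by
  rw [energy, energy]
  congr 1
  funext r
  rw [gradSq_reflect m hm.smooth, reflectSpin_two]
  congr 1
  have hpd : ∀ ν : Fin 2, ∀ i : Fin 3,
      pd ν (reflectSpin m) r i = refl3 (pd ν m r) i := by
    intro ν i
    rcases eq_or_ne ν 0 with h | h <;>
      simp [pd, h, pdx_reflect m hm.smooth, pdy_reflect m hm.smooth]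
  simp only [eDM, frob, chirality, Fin.sum_univ_two, Matrix.of_apply, lc,
    Matrix.diagonal, Matrix.of_apply, Matrix.cons_val_zero, Matrix.cons_val_one,
    Matrix.head_cons, reflectSpin_two, hpd]
  have h0 : ∀ ν : Fin 2, refl3 (pd ν m r) ((0 : Fin 2).castSucc) = pd ν m r 0 := fun ν => rfl
  have h2 : ∀ ν : Fin 2, refl3 (pd ν m r) 2 = pd ν m r 2 := fun ν => rfl
  have hr0 : reflectSpin m r ((0 : Fin 2).castSucc) = m r 0 := rfl
  simp only [Fin.castSucc] at h0 hr0 ⊢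
  simp only [h0, h2, hr0, show (Fin.castAdd 1 (0 : Fin 2)) = (0 : Fin 3) from rfl,
    show ∀ ν : Fin 2, refl3 (pd ν m r) (0 : Fin 3) = pd ν m r 0 from fun _ => rfl,
    show reflectSpin m r (0 : Fin 3) = m r 0 from rfl]
  norm_num

lemma energySet_subset (J B K D₂ : ℝ) (q : ℤ) :
    {e : ℝ | ∃ m, Admissible m ∧ topCharge m = (q : ℝ) ∧
        energy J B K (Matrix.diagonal ![0, D₂]) m = e} ⊆
      {e : ℝ | ∃ m, Admissible m ∧ topCharge m = ((-q : ℤ) : ℝ) ∧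
        energy J B K (Matrix.diagonal ![0, D₂]) m = e} := by
  rintro e ⟨m, hm, hq, he⟩
  refine ⟨reflectSpin m, admissible_reflect hm, ?_, ?_⟩
  · rw [topCharge_reflect hm, hq]; push_cast; ring
  · rw [energy_reflect J B K D₂ hm, he]

/-- **degenerate case.** For `D = diag(0, D₂)` with `D₂ ≥ 0`,
the least energies are symmetric under charge reversal: `E_Q = E_{−Q}`. -/
theorem degenerate_charge_symmetry (J B K D₂ : ℝ)
    (hJ : 0 < J) (hB : 0 < B) (hK : K ≤ 0) (hD₂ : 0 ≤ D₂) :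
    ∀ q : ℤ, leastEnergy J B K (Matrix.diagonal ![0, D₂]) q =
      leastEnergy J B K (Matrix.diagonal ![0, D₂]) (-q) := by
  intro q
  unfold leastEnergy
  congr 1
  apply Set.Subset.antisymm
  · exact energySet_subset J B K D₂ q
  · have := energySet_subset J B K D₂ (-q)
    simpa using this

end
end
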